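/- (Lemma 6.) Let S = {o₁, …, o_m} with o₁ < ⋯ < o_m be a set of vertices that two-sided guards every point of the terrain, let 1 ≤ i ≤ m, let N be the leftmost point not left-guarded by {o₁, …, o_i}, and let l = L(N) be the leftmost vertex that sees N. Suppose l ∉ O_L(N). Then for every point x of the terrain with x < l and every g ∈ O_L(N), g does not right-guard x (i.e., g does not see x). -/

import Mathlib

/-- `p` sees `q` on terrain `T`: the segment joining `(p, T p)` and `(q, T q)`
lies on or above the graph of `T`. -/
def Sees (T : ℝ → ℝ) (p q : ℝ) : Prop :=
  ∀ t ∈ Set.Icc (0 : ℝ) 1, T ((1 - t) * p + t * q) ≤ (1 - t) * T p + t * T q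

/-- `v` left-guards `p`: `v` is on or to the left of `p` and sees `p`. -/
def LeftGuards (T : ℝ → ℝ) (v p : ℝ) : Prop := v ≤ p ∧ Sees T v p

/-- `v` right-guards `p`: `v` is on or to the right of `p` and sees `p`. -/
def RightGuards (T : ℝ → ℝ) (v p : ℝ) : Prop := p ≤ v ∧ Sees T v p

/-- A set `S` two-sided guards `p` if some member left-guards `p` and some member
right-guards `p`. -/
def TwoSidedGuards (T : ℝ → ℝ) (S : Set ℝ) (p : ℝ) : Prop :=
  (∃ v ∈ S, LeftGuards T v p) ∧ (∃ v ∈ S, RightGuards T v p)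

/-- A 1.5D terrain with `n + 1` vertices: an `x`-monotone polygonal chain, given by
strictly increasing vertex abscissas `x 0 < ⋯ < x n` and a height function `T` which is
continuous on `[x 0, x n]` and affine on each edge interval `[x j, x (j+1)]`. -/
structure Terrain (n : ℕ) where
  x : Fin (n + 1) → ℝ
  mono : StrictMono x
  T : ℝ → ℝ
  cont : ContinuousOn T (Set.Icc (x 0) (x (Fin.last n)))
  affine : ∀ j : Fin n, ∀ t ∈ Set.Icc (0 : ℝ) 1,
    T ((1 - t) * x j.castSucc + t * x j.succ) =
      (1 - t) * T (x j.castSucc) + t * T (x j.succ)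

/-!
If a left guard `g` of `N` saw a point `p < l`, then since `l` also sees `N` and
`p < l < g ≤ N`, the two sight lines `p g` and `l N` cross, which forces `p` to see `N`.
The left endpoint of the edge containing `p` then sees `N` as well, contradicting the
choice of `l` as the leftmost vertex seeing `N`.
-/

open Set

/-- The point `(y, T y)` lies on or below the line through `(a, T a)` and `(b, T b)`
(for `a < b`; the inequality is cleared of denominators). -/
def BelowChord (T : ℝ → ℝ) (a b y : ℝ) : Prop :=
  (b - a) * T y ≤ (b - y) * T a + (y - a) * T b

lemma mem_Icc_iff_eq_combo {a b y : ℝ} (hab : a ≤ b) :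
    y ∈ Icc a b ↔ ∃ θ ∈ Icc (0 : ℝ) 1, (1 - θ) * a + θ * b = y := by
  simp [← segment_eq_Icc hab, segment_eq_image]

section Visibility

variable {T : ℝ → ℝ}

lemma Sees.symm {p q : ℝ} (h : Sees T p q) : Sees T q p := by
  intro t ht
  have h' := h (1 - t) ⟨by linarith [ht.2], by linarith [ht.1]⟩
  rw [show (1 - (1 - t)) * p + (1 - t) * q = (1 - t) * q + t * p by ring] at h'
  linarith

lemma sees_iff_forall_belowChord {a b : ℝ} (hab : a < b) :
    Sees T a b ↔ ∀ y ∈ Icc a b, BelowChord T a b y := by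
  have hba : 0 < b - a := sub_pos.2 hab
  constructor
  · intro h y hy
    obtain ⟨θ, hθ, rfl⟩ := (mem_Icc_iff_eq_combo hab.le).1 hy
    have key := mul_le_mul_of_nonneg_left (h θ hθ) hba.le
    exact key.trans_eq (by ring)
  · intro h t ht
    have key := h _ ((mem_Icc_iff_eq_combo hab.le).2 ⟨t, ht, rfl⟩)
    refine le_of_mul_le_mul_left (key.trans_eq ?_) hba
    ring

lemma belowChord_crossing {a b c d : ℝ} (hab : a ≤ b) (hbc : b < c) (hcd : c ≤ d)
    (hb : BelowChord T a c b) (hc : BelowChord T b d c) :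
    BelowChord T a d b ∧ BelowChord T a d c := by
  unfold BelowChord at *
  have hcb : 0 < c - b := sub_pos.2 hbc
  have hb' := mul_le_mul_of_nonneg_left hb (by linarith : 0 ≤ d - c)
  have hc' := mul_le_mul_of_nonneg_left hc (by linarith : 0 ≤ c - a)
  have hb'' := mul_le_mul_of_nonneg_left hb (by linarith : 0 ≤ d - b)
  have hc'' := mul_le_mul_of_nonneg_left hc (by linarith : 0 ≤ b - a)
  constructor
  · refine le_of_mul_le_mul_left ?_ hcb
    linear_combination hb'' + hc''
  · refine le_of_mul_le_mul_left ?_ hcb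
    linear_combination hb' + hc'

lemma BelowChord.extend_right {a c d y : ℝ} (hay : a ≤ y) (hac : a < c) (hcd : c ≤ d)
    (hy : BelowChord T a c y) (hc : BelowChord T a d c) : BelowChord T a d y := by
  unfold BelowChord at *
  have hy' := mul_le_mul_of_nonneg_left hy (by linarith : 0 ≤ d - a)
  have hc' := mul_le_mul_of_nonneg_left hc (sub_nonneg.2 hay)
  refine le_of_mul_le_mul_left ?_ (sub_pos.2 hac)
  linear_combination hy' + hc'

lemma BelowChord.extend_left {a b d y : ℝ} (hyd : y ≤ d) (hbd : b < d) (hab : a ≤ b)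
    (hy : BelowChord T b d y) (hb : BelowChord T a d b) : BelowChord T a d y := by
  unfold BelowChord at *
  have hy' := mul_le_mul_of_nonneg_left hy (by linarith : 0 ≤ d - a)
  have hb' := mul_le_mul_of_nonneg_left hb (sub_nonneg.2 hyd)
  refine le_of_mul_le_mul_left ?_ (sub_pos.2 hbd)
  linear_combination hy' + hb'

/-- Crossing sight lines force `b` and `c` below the chord `a d`; left of `c` the terrain is
then below the chord `a c`, right of it below the chord `b d`, and both lie below `a d`. -/
lemma Sees.of_crossing {a b c d : ℝ} (hab : a ≤ b) (hbc : b < c) (hcd : c ≤ d)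
    (hac : Sees T a c) (hbd : Sees T b d) : Sees T a d := by
  have hac' := (sees_iff_forall_belowChord (hab.trans_lt hbc)).1 hac
  have hbd' := (sees_iff_forall_belowChord (hbc.trans_le hcd)).1 hbd
  obtain ⟨hb, hc⟩ := belowChord_crossing hab hbc hcd (hac' b ⟨hab, hbc.le⟩)
    (hbd' c ⟨hbc.le, hcd⟩)
  rw [sees_iff_forall_belowChord (by linarith)]
  intro y hy
  rcases le_total y c with hyc | hcy
  · exact (hac' y ⟨hy.1, hyc⟩).extend_right hy.1 (hab.trans_lt hbc) hcd hc
  · exact (hbd' y ⟨hbc.le.trans hcy, hy.2⟩).extend_left hy.2 (hbc.trans_le hcd) hab hb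

lemma sees_of_affine_on_segment {a b : ℝ}
    (hT : ∀ t ∈ Icc (0 : ℝ) 1, T ((1 - t) * a + t * b) = (1 - t) * T a + t * T b)
    {u w : ℝ} (hu : u ∈ segment ℝ a b) (hw : w ∈ segment ℝ a b) : Sees T u w := by
  simp only [segment_eq_image, smul_eq_mul] at hu hw
  obtain ⟨θ₁, hθ₁, rfl⟩ := hu
  obtain ⟨θ₂, hθ₂, rfl⟩ := hw
  intro t ht
  have hθ : (1 - t) * θ₁ + t * θ₂ ∈ Icc (0 : ℝ) 1 :=
    convex_Icc 0 1 hθ₁ hθ₂ (by linarith [ht.2]) ht.1 (by ring)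
  rw [show (1 - t) * ((1 - θ₁) * a + θ₁ * b) + t * ((1 - θ₂) * a + θ₂ * b)
      = (1 - ((1 - t) * θ₁ + t * θ₂)) * a + ((1 - t) * θ₁ + t * θ₂) * b by ring,
    hT _ hθ, hT θ₁ hθ₁, hT θ₂ hθ₂]
  exact le_of_eq (by ring)

end Visibility

lemma exists_castSucc_le_lt_succ {α : Type*} [LinearOrder α] {n : ℕ} (f : Fin (n + 1) → α)
    {p : α} (h0 : f 0 ≤ p) (hlast : p < f (Fin.last n)) :
    ∃ j : Fin n, f j.castSucc ≤ p ∧ p < f j.succ := by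
  induction n with
  | zero => exact absurd hlast (not_lt.2 h0)
  | succ n ih =>
    by_cases hp : p < f (Fin.last n).castSucc
    · obtain ⟨j, hj⟩ := ih (fun k => f k.castSucc) h0 hp
      exact ⟨j.castSucc, hj⟩
    · exact ⟨Fin.last n, not_lt.1 hp, hlast⟩

namespace Terrain

variable {n : ℕ} (Ter : Terrain n)

lemma sees_of_mem_edge (j : Fin n) {u w : ℝ} (hu : u ∈ Icc (Ter.x j.castSucc) (Ter.x j.succ))
    (hw : w ∈ Icc (Ter.x j.castSucc) (Ter.x j.succ)) : Sees Ter.T u w := by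
  rw [← segment_eq_Icc (Ter.mono j.castSucc_lt_succ).le] at hu hw
  exact sees_of_affine_on_segment (Ter.affine j) hu hw

lemma le_x_last {v : ℝ} (hv : v ∈ range Ter.x) : v ≤ Ter.x (Fin.last n) := by
  obtain ⟨k, rfl⟩ := hv
  exact Ter.mono.monotone (Fin.le_last k)

/-- The left endpoint `a` of the edge containing `p` sees `q`: it sees the point
`min q b` of its own edge, and that sight line crosses the one from `p` to `q`. -/
lemma exists_vertex_le_sees {p q : ℝ} (hp0 : Ter.x 0 ≤ p) (hplast : p < Ter.x (Fin.last n))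
    (hpq : p < q) (hsees : Sees Ter.T p q) :
    ∃ v ∈ range Ter.x, v ≤ p ∧ Sees Ter.T v q := by
  obtain ⟨j, hjp, hpj⟩ := exists_castSucc_le_lt_succ Ter.x hp0 hplast
  have hedge : Sees Ter.T (Ter.x j.castSucc) (min q (Ter.x j.succ)) :=
    Ter.sees_of_mem_edge j ⟨le_rfl, (Ter.mono j.castSucc_lt_succ).le⟩
      ⟨hjp.trans (lt_min hpq hpj).le, min_le_right _ _⟩
  exact ⟨_, mem_range_self _, hjp,
    hedge.of_crossing hjp (lt_min hpq hpj) (min_le_left _ _) hsees⟩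

end Terrain

theorem lemma6_cannot_guard_left_general {n m : ℕ} (Ter : Terrain n) (o : Fin m → ℝ)
    (ho_vert : ∀ k : Fin m, o k ∈ Set.range Ter.x) (N : ℝ) (l : ℝ)
    (hl_sees : Sees Ter.T l N)
    (hl_min : ∀ v ∈ Set.range Ter.x, v < l → ¬ Sees Ter.T v N)
    (hl_not : ¬ (l ∈ Set.range o ∧ LeftGuards Ter.T l N)) :
    ∀ p ∈ Set.Icc (Ter.x 0) (Ter.x (Fin.last n)), p < l →
      ∀ g ∈ Set.range o, LeftGuards Ter.T g N → ¬ Sees Ter.T g p := by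
  rintro p hp hpl g ⟨k, rfl⟩ hgN hgp
  have hlg : l < o k := by
    refine lt_of_le_of_ne (not_lt.1 fun h => hl_min _ (ho_vert k) h hgN.2) ?_
    rintro rfl
    exact hl_not ⟨mem_range_self k, hgN⟩
  have hpN : Sees Ter.T p N := hgp.symm.of_crossing hpl.le hlg hgN.1 hl_sees
  obtain ⟨v, hv, hvp, hvN⟩ := Ter.exists_vertex_le_sees hp.1
    (hpl.trans (hlg.trans_le (Ter.le_x_last (ho_vert k)))) (hpl.trans (hlg.trans_le hgN.1)) hpN
  exact hl_min v hv (hvp.trans_lt hpl) hvN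

/-- **Lemma 6.** With `N` the leftmost point not left-guarded by `{o 1, …, o i}` and
`l = L(N)` the leftmost vertex seeing `N`, if `l ∉ O_L(N)` then no guard of `O_L(N)`
can right-guard (indeed, see) any point strictly left of `l`. -/
theorem lemma6_cannot_guard_left {n m : ℕ} (Ter : Terrain n) (hn : 1 ≤ n)
    (o : Fin m → ℝ) (ho_mono : StrictMono o)
    (ho_vert : ∀ k : Fin m, o k ∈ Set.range Ter.x)
    (ho_guard : ∀ p ∈ Set.Icc (Ter.x 0) (Ter.x (Fin.last n)),
      TwoSidedGuards Ter.T (Set.range o) p)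
    (i : Fin m)
    (N : ℝ) (hN : N ∈ Set.Icc (Ter.x 0) (Ter.x (Fin.last n)))
    (hN_not : ∀ j : Fin m, j ≤ i → ¬ LeftGuards Ter.T (o j) N)
    (hN_min : ∀ p ∈ Set.Icc (Ter.x 0) (Ter.x (Fin.last n)), p < N →
      ∃ j : Fin m, j ≤ i ∧ LeftGuards Ter.T (o j) p)
    (l : ℝ) (hl_vert : l ∈ Set.range Ter.x)
    (hl_sees : Sees Ter.T l N)
    (hl_min : ∀ v ∈ Set.range Ter.x, v < l → ¬ Sees Ter.T v N)
    (hl_not : ¬ (l ∈ Set.range o ∧ LeftGuards Ter.T l N)) :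
    ∀ p ∈ Set.Icc (Ter.x 0) (Ter.x (Fin.last n)), p < l →
      ∀ g ∈ Set.range o, LeftGuards Ter.T g N → ¬ Sees Ter.T g p :=
  lemma6_cannot_guard_left_general Ter o ho_vert N l hl_sees hl_min hl_not
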